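/- Let p ≥ 2 be an integer and let w₀ = (1/p, …, 1/p) ∈ ℝ^p. Let w' ∈ ℝ^p be a fixed vector with Σᵢ |w'ᵢ| = 1, w' ≠ w₀, and w' ≠ −w₀. Then Q(w',r) → +∞ as r → 1 from the left (with r ranging in (0,1)); that is, among all normalized group effects, only the average group effect (up to overall sign) has an estimator whose variance remains bounded as the multicollinearity level approaches its extreme. -/

import Mathlib

open Matrix Filter Topology

/-- The `p × p` Gram/correlation matrix of a uniform model at multicollinearity
level `r`: diagonal entries `1`, off-diagonal entries `r`. -/
noncomputable def unifMat (p : ℕ) (r : ℝ) : Matrix (Fin p) (Fin p) ℝ :=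
  fun i j => if i = j then 1 else r

/-- `Q(w,r) = wᵀ A(p,r)⁻¹ w`. -/
noncomputable def Qform (p : ℕ) (r : ℝ) (w : Fin p → ℝ) : ℝ :=
  w ⬝ᵥ (unifMat p r)⁻¹.mulVec w

/-!
Since `A(p,r) = (1 - r) I + r J`, it acts as `1 - r` on mean-zero vectors and as
`1 + (p - 1) r` on constant vectors. Splitting `w` into its mean `m` and the deviation `w - m`
gives `Q(w,r) = ‖w - m‖² / (1 - r) + p m² / (1 + (p - 1) r)`. The second term is nonnegative
on `(0,1)`, and the first tends to `+∞` as `r → 1⁻` unless `w` is constant; a constant vector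
with `Σᵢ |wᵢ| = 1` is `±w₀`.
-/

open Finset
open scoped BigOperators

variable {p : ℕ} {r : ℝ}

lemma natCast_mul_expect (w : Fin p → ℝ) : (p : ℝ) * 𝔼 i, w i = ∑ i, w i := by
  simpa [nsmul_eq_mul] using card_smul_expect univ w

lemma sum_sub_expect (w : Fin p → ℝ) : ∑ i, (w i - 𝔼 j, w j) = 0 := by
  simp [sum_sub_distrib, ← natCast_mul_expect w]

lemma unifMat_mulVec (r : ℝ) (v : Fin p → ℝ) :
    unifMat p r *ᵥ v = fun i => (1 - r) * v i + r * ∑ j, v j := by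
  ext i
  have : ∀ j, unifMat p r i j = r + if i = j then 1 - r else 0 := fun j => by
    unfold unifMat; split_ifs <;> ring
  simp only [mulVec, dotProduct, this, add_mul, ite_mul, zero_mul, sum_add_distrib, sum_ite_eq,
    mem_univ, ↓reduceIte, mul_sum]
  ring

lemma unifMat_mulVec_solution (hr : r ≠ 1) (hpr : 1 + (p - 1) * r ≠ 0) (w : Fin p → ℝ) :
    unifMat p r *ᵥ (fun i => (w i - 𝔼 j, w j) / (1 - r) + (𝔼 j, w j) / (1 + (p - 1) * r)) =
      w := by
  have h1 : 1 - r ≠ 0 := sub_ne_zero.2 hr.symm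
  ext i
  simp only [unifMat_mulVec, sum_add_distrib, ← sum_div, sum_sub_expect, sum_const, card_univ,
    Fintype.card_fin, nsmul_eq_mul, zero_div, mul_add, mul_div_cancel₀ _ h1]
  -- kept atomic so that `field_simp` recognises the denominator `hpr` rules out
  set d := 1 + ((p : ℝ) - 1) * r with hd
  field_simp
  rw [hd]
  ring

lemma isUnit_unifMat (hr : r ≠ 1) (hpr : 1 + (p - 1) * r ≠ 0) : IsUnit (unifMat p r) :=
  mulVec_surjective_iff_isUnit.1 fun w => ⟨_, unifMat_mulVec_solution hr hpr w⟩

lemma unifMat_inv_mulVec (hr : r ≠ 1) (hpr : 1 + (p - 1) * r ≠ 0) (w : Fin p → ℝ) :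
    (unifMat p r)⁻¹ *ᵥ w =
      fun i => (w i - 𝔼 j, w j) / (1 - r) + (𝔼 j, w j) / (1 + (p - 1) * r) := by
  conv_lhs => rw [← unifMat_mulVec_solution hr hpr w]
  rw [mulVec_mulVec, nonsing_inv_mul _ ((isUnit_iff_isUnit_det _).1 (isUnit_unifMat hr hpr)),
    one_mulVec]

lemma Qform_eq (hr : r ≠ 1) (hpr : 1 + (p - 1) * r ≠ 0) (w : Fin p → ℝ) :
    Qform p r w =
      (∑ i, (w i - 𝔼 j, w j) ^ 2) / (1 - r) + p * (𝔼 j, w j) ^ 2 / (1 + (p - 1) * r) := by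
  have hsq : ∑ i, (w i - 𝔼 j, w j) ^ 2 = ∑ i, w i * (w i - 𝔼 j, w j) := by
    have : ∑ i, (w i - 𝔼 j, w j) ^ 2 =
        ∑ i, w i * (w i - 𝔼 j, w j) - (𝔼 j, w j) * ∑ i, (w i - 𝔼 j, w j) := by
      rw [mul_sum, ← sum_sub_distrib]
      exact sum_congr rfl fun i _ => by ring
    rw [this, sum_sub_expect, mul_zero, sub_zero]
  rw [Qform, unifMat_inv_mulVec hr hpr, dotProduct, hsq, sum_div, sq, ← mul_assoc,
    natCast_mul_expect, sum_mul, sum_div, ← sum_add_distrib]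
  exact sum_congr rfl fun i _ => by ring

lemma one_add_sub_one_mul_pos (p : ℕ) (hr₀ : 0 ≤ r) (hr₁ : r < 1) :
    0 < 1 + ((p : ℝ) - 1) * r := by
  nlinarith [(Nat.cast_nonneg p : (0 : ℝ) ≤ p)]

lemma tendsto_inv_one_sub_nhdsLT_one : Tendsto (fun r : ℝ => (1 - r)⁻¹) (𝓝[<] 1) atTop := by
  refine tendsto_inv_nhdsGT_zero.comp
    (tendsto_nhdsWithin_of_tendsto_nhds_of_eventually_within _ ?_ ?_)
  · have : Tendsto (fun r : ℝ => 1 - r) (𝓝 1) (𝓝 0) := by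
      simpa using (continuous_sub_left (1 : ℝ)).tendsto 1
    exact this.mono_left nhdsWithin_le_nhds
  · filter_upwards [self_mem_nhdsWithin] with r (hr : r < 1) using sub_pos.2 hr

lemma eq_const_of_sum_sq_sub_eq_zero (w : Fin p → ℝ) (c : ℝ) (h : ∑ i, (w i - c) ^ 2 = 0) :
    w = fun _ => c := by
  ext i
  rw [sum_eq_zero_iff_of_nonneg fun i _ => sq_nonneg _] at h
  exact sub_eq_zero.1 (pow_eq_zero_iff two_ne_zero |>.1 (h i (mem_univ i)))

lemma eq_or_eq_neg_of_sum_abs_const_eq_one {c : ℝ} (h : ∑ _i : Fin p, |c| = 1) :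
    c = 1 / p ∨ c = -(1 / p) := by
  simp only [sum_const, card_univ, Fintype.card_fin, nsmul_eq_mul] at h
  have hp : (p : ℝ) ≠ 0 := left_ne_zero_of_mul_eq_one h
  exact abs_eq (by positivity) |>.1 (by field_simp; linarith)

theorem variance_diverges_off_average_l1_general (p : ℕ) (w' : Fin p → ℝ)
    (hw1 : (∑ i, |w' i|) = 1)
    (hne : w' ≠ fun _ => 1 / (p : ℝ))
    (hne' : w' ≠ fun _ => -(1 / (p : ℝ))) :
    Tendsto (fun r : ℝ => Qform p r w') (𝓝[Set.Ioo (0 : ℝ) 1] 1) atTop := by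
  set m := 𝔼 j, w' j
  have hspread : 0 < ∑ i, (w' i - m) ^ 2 := by
    refine (sum_nonneg fun i _ => sq_nonneg _).lt_of_ne fun h => ?_
    rw [eq_const_of_sum_sq_sub_eq_zero w' m h.symm] at hw1 hne hne'
    rcases eq_or_eq_neg_of_sum_abs_const_eq_one hw1 with hm | hm
    exacts [hne (by rw [hm]), hne' (by rw [hm])]
  have hblowup : Tendsto (fun r : ℝ => (∑ i, (w' i - m) ^ 2) / (1 - r))
      (𝓝[Set.Ioo 0 1] 1) atTop := by
    simpa only [div_eq_mul_inv] using (tendsto_inv_one_sub_nhdsLT_one.mono_left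
      (nhdsWithin_mono _ Set.Ioo_subset_Iio_self)).const_mul_atTop hspread
  have hconst_part :
      ∀ᶠ r in 𝓝[Set.Ioo 0 1] 1, 0 ≤ (p : ℝ) * m ^ 2 / (1 + (p - 1) * r) := by
    filter_upwards [self_mem_nhdsWithin] with r ⟨hr₀, hr₁⟩
    have := one_add_sub_one_mul_pos p hr₀.le hr₁
    positivity
  have hQ : ∀ᶠ r in 𝓝[Set.Ioo 0 1] 1,
      (∑ i, (w' i - m) ^ 2) / (1 - r) + p * m ^ 2 / (1 + (p - 1) * r) = Qform p r w' := by
    filter_upwards [self_mem_nhdsWithin] with r ⟨hr₀, hr₁⟩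
    exact (Qform_eq hr₁.ne (one_add_sub_one_mul_pos p hr₀.le hr₁).ne' w').symm
  exact (tendsto_atTop_add_right_of_le' _ 0 hblowup hconst_part).congr' hQ

/-- for any fixed weight vector `w'` with `Σᵢ |w'ᵢ| = 1` that is
not `±w₀ = ±(1/p, …, 1/p)`, the variance `Q(w',r)` tends to `+∞` as `r → 1⁻`
(with `r` ranging in `(0,1)`); only the average group effect (up to sign) stays
bounded. -/
theorem variance_diverges_off_average_l1 (p : ℕ) (hp : 2 ≤ p) (w' : Fin p → ℝ)
    (hw1 : (∑ i, |w' i|) = 1)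
    (hne : w' ≠ fun _ => 1 / (p : ℝ))
    (hne' : w' ≠ fun _ => -(1 / (p : ℝ))) :
    Tendsto (fun r : ℝ => Qform p r w') (𝓝[Set.Ioo (0 : ℝ) 1] 1) atTop :=
  variance_diverges_off_average_l1_general p w' hw1 hne hne'
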